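/- arXiv:1912.01307 — 2 statements merged into one kernel-verified Lean document; each statement's English description precedes it below -/
import Mathlib

section
/- Let d ≥ 2 and s(d)=d(d+1)/2. For any 0 < δ < 1/2 and any N ∈ ℕ with Nδ > 1, letting μ_{[δ,1/2]} be the pushforward of Lebesgue measure on [δ,1/2] under t ↦ (t, t², …, t^d) and D_N = {ξ ∈ ℤ^d : |ξ_i| ≤ s(d)N^i, i=1,…,d}, we have ∑_{ξ ∈ D_N} |μ̂_{[δ,1/2]}(ξ)|² ≤ C δ^{1-d} N^{s(d)-d}, with C depending only on d. -/
/-!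
Split off the top-degree frequency: for fixed lower frequencies `ζ` the integrand is
`g(t) e(-t^d m)` with `|g| = 1`. Every `|m| ≤ M` is a difference `k - j` of at least `M` pairs
`(j, k) ∈ [0, 2M)²`, and for `K = 2M`
`∑_{j,k<K} |∫ g(t) e(-(k-j) t^d) dt|² = ∫∫ g(t) ḡ(u) |S_K(u^d - t^d)|² du dt`,
where `S_K(x) = ∑_{k<K} e(kx)`. The kernel obeys `|S_K(x)|² ≤ 2K²/(1 + (2Kx)²)` for `|x| ≤ 1/2`,
and `|u^d - t^d| ≥ δ^{d-1} |u - t|` on `[δ, 1/2]`, so the inner integral is at most `π K δ^{1-d}`.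
Each fibre thus contributes at most `π δ^{1-d}`, and there are `O(N^{s(d)-d})` fibres.
-/

open MeasureTheory intervalIntegral

noncomputable def e (x : ℝ) : ℂ := Complex.exp (2 * Real.pi * Complex.I * x)

open Finset ComplexConjugate Real

lemma e_add (x y : ℝ) : e (x + y) = e x * e y := by
  simp only [e, ← Complex.exp_add]; push_cast; ring_nf

lemma e_natCast_mul (k : ℕ) (x : ℝ) : e (k * x) = e x ^ k := by
  simp only [e, ← Complex.exp_nat_mul]; push_cast; ring_nf

lemma norm_e (x : ℝ) : ‖e x‖ = 1 := by
  rw [e, show 2 * π * Complex.I * x = ((2 * π * x : ℝ) : ℂ) * Complex.I by push_cast; ring,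
    Complex.norm_exp_ofReal_mul_I]

lemma conj_e (x : ℝ) : conj (e x) = e (-x) := by
  simp only [e, ← Complex.exp_conj, map_mul, Complex.conj_I, Complex.conj_ofReal, map_ofNat]
  push_cast; ring_nf

@[fun_prop]
lemma continuous_e : Continuous e := by
  unfold e; fun_prop

lemma four_mul_abs_le_norm_e_sub_one {x : ℝ} (hx : |x| ≤ 1 / 2) : 4 * |x| ≤ ‖e x - 1‖ := by
  have hsin : 2 / π * |π * x| ≤ |sin (π * x)| :=
    mul_abs_le_abs_sin (by rw [abs_mul, abs_of_pos pi_pos]; nlinarith [pi_pos])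
  rw [e, show 2 * π * Complex.I * x = Complex.I * ((2 * π * x : ℝ) : ℂ) by push_cast; ring,
    Complex.norm_exp_I_mul_ofReal_sub_one, norm_mul, Real.norm_eq_abs, Real.norm_eq_abs,
    show 2 * π * x / 2 = π * x by ring]
  rw [abs_mul, abs_of_pos pi_pos] at hsin
  have : 2 / π * (π * |x|) = 2 * |x| := by field_simp
  norm_num; linarith

noncomputable def expSum (K : ℕ) (x : ℝ) : ℂ := ∑ k ∈ range K, e (k * x)

lemma norm_expSum_le (K : ℕ) (x : ℝ) : ‖expSum K x‖ ≤ K :=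
  (norm_sum_le _ _).trans (by simp [norm_e])

lemma norm_expSum_le_inv {K : ℕ} {x : ℝ} (hx0 : x ≠ 0) (hx : |x| ≤ 1 / 2) :
    ‖expSum K x‖ ≤ (2 * |x|)⁻¹ := by
  have hlow := four_mul_abs_le_norm_e_sub_one hx
  have hpos : 0 < ‖e x - 1‖ := lt_of_lt_of_le (by positivity) hlow
  have hgeom : expSum K x = (e x ^ K - 1) / (e x - 1) := by
    rw [← geom_sum_eq (sub_ne_zero.mp (norm_pos_iff.mp hpos)), expSum]
    simp only [e_natCast_mul]
  have hnum : ‖e x ^ K - 1‖ ≤ 2 :=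
    (norm_sub_le _ _).trans (by rw [norm_pow, norm_e]; norm_num)
  rw [hgeom, norm_div, div_le_iff₀ hpos]
  calc ‖e x ^ K - 1‖ ≤ 2 := hnum
    _ = (2 * |x|)⁻¹ * (4 * |x|) := by field_simp; ring
    _ ≤ (2 * |x|)⁻¹ * ‖e x - 1‖ := by gcongr

lemma sq_norm_expSum_le {K : ℕ} {x : ℝ} (hx : |x| ≤ 1 / 2) :
    ‖expSum K x‖ ^ 2 ≤ 2 * K ^ 2 / (1 + (2 * K * x) ^ 2) := by
  have hy : (2 * K * x) ^ 2 = (2 * K * |x|) ^ 2 := by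
    rw [← sq_abs, abs_mul, abs_of_nonneg (by positivity : (0:ℝ) ≤ 2 * K)]
  rw [hy, le_div_iff₀ (by positivity)]
  rcases le_or_gt (2 * K * |x|) 1 with hsmall | hlarge
  · have h := pow_le_pow_left₀ (norm_nonneg _) (norm_expSum_le K x) 2
    have : (2 * K * |x|) ^ 2 ≤ 1 := pow_le_one₀ (by positivity) hsmall
    nlinarith [sq_nonneg ‖expSum K x‖]
  · have hx0 : x ≠ 0 := by rintro rfl; norm_num at hlarge
    have h := pow_le_pow_left₀ (norm_nonneg _) (norm_expSum_le_inv (K := K) hx0 hx) 2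
    rw [inv_pow, ← one_div, le_div_iff₀ (by positivity)] at h
    nlinarith [sq_nonneg ‖expSum K x‖]

lemma pow_mul_abs_sub_le_abs_pow_sub_pow {δ t u : ℝ} {d : ℕ} (hd : d ≠ 0) (hδ : 0 ≤ δ)
    (ht : δ ≤ t) (hu : δ ≤ u) : δ ^ (d - 1) * |u - t| ≤ |u ^ d - t ^ d| := by
  have ht0 : 0 ≤ t := hδ.trans ht
  have hu0 : 0 ≤ u := hδ.trans hu
  have hterm : δ ^ (d - 1) ≤ ∑ i ∈ range d, u ^ i * t ^ (d - 1 - i) :=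
    calc δ ^ (d - 1) ≤ u ^ 0 * t ^ (d - 1 - 0) := by simpa using pow_le_pow_left₀ hδ ht _
      _ ≤ _ := single_le_sum (f := fun i => u ^ i * t ^ (d - 1 - i)) (fun i _ => by positivity)
          (mem_range.mpr (Nat.pos_of_ne_zero hd))
  rw [← geom_sum₂_mul, abs_mul]
  exact mul_le_mul_of_nonneg_right (hterm.trans (le_abs_self _)) (abs_nonneg _)

lemma integral_inv_one_add_sq_mul_sub_le {β : ℝ} (hβ : 0 < β) (a b t : ℝ) :
    ∫ u in a..b, (1 + (β * (u - t)) ^ 2)⁻¹ ≤ π / β := by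
  rw [intervalIntegral.integral_comp_sub_right (fun y => (1 + (β * y) ^ 2)⁻¹) t,
    intervalIntegral.integral_comp_mul_left (fun z => (1 + z ^ 2)⁻¹) hβ.ne',
    integral_inv_one_add_sq, smul_eq_mul, div_eq_inv_mul]
  gcongr
  linarith [arctan_lt_pi_div_two (β * (b - t)), neg_pi_div_two_lt_arctan (β * (a - t))]

lemma sq_norm_expSum (K : ℕ) (x : ℝ) :
    ((‖expSum K x‖ ^ 2 : ℝ) : ℂ) = ∑ p ∈ range K ×ˢ range K, e (((p.2 : ℤ) - p.1 : ℤ) * x) := by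
  rw [Complex.ofReal_pow, ← Complex.mul_conj', expSum, map_sum, sum_mul_sum, sum_product_right]
  refine sum_congr rfl fun k _ => sum_congr rfl fun j _ => ?_
  rw [conj_e, ← e_add]; congr 1; push_cast; ring

lemma sum_sq_norm_integral_eq {g : ℝ → ℂ} {φ : ℝ → ℝ} (hg : Continuous g) (hφ : Continuous φ)
    (a b : ℝ) (K : ℕ) :
    ((∑ p ∈ range K ×ˢ range K,
        ‖∫ t in a..b, g t * e (-(φ t * ((p.2 : ℤ) - p.1 : ℤ)))‖ ^ 2 : ℝ) : ℂ) =
      ∫ t in a..b, ∫ u in a..b, g t * conj (g u) * ((‖expSum K (φ u - φ t)‖ ^ 2 : ℝ) : ℂ) := by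
  have hA : ∀ m : ℤ, ((‖∫ t in a..b, g t * e (-(φ t * m))‖ ^ 2 : ℝ) : ℂ)
      = ∫ t in a..b, ∫ u in a..b, g t * conj (g u) * e (m * (φ u - φ t)) := by
    intro m
    rw [Complex.ofReal_pow, ← Complex.mul_conj', ← intervalIntegral_conj,
      ← intervalIntegral.integral_mul_const]
    refine intervalIntegral.integral_congr fun t _ => ?_
    rw [← intervalIntegral.integral_const_mul]
    refine intervalIntegral.integral_congr fun u _ => ?_
    simp only [map_mul, conj_e]
    rw [show m * (φ u - φ t) = -(φ t * m) + - -(φ u * m) by ring, e_add]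
    ring
  simp_rw [Complex.ofReal_sum, hA, sq_norm_expSum, mul_sum]
  rw [← intervalIntegral.integral_finsetSum fun p _ => ?_]
  · refine intervalIntegral.integral_congr fun t _ => ?_
    exact (intervalIntegral.integral_finsetSum fun p _ =>
      (by fun_prop : Continuous _).intervalIntegrable _ _).symm
  · exact (intervalIntegral.continuous_parametric_intervalIntegral_of_continuous'
      (by fun_prop) a b).intervalIntegrable _ _

lemma sq_norm_expSum_pow_sub_pow_le {δ t u : ℝ} {d : ℕ} (K : ℕ) (hd : d ≠ 0) (hδ : 0 ≤ δ)
    (ht : t ∈ Set.Icc δ (1 / 2)) (hu : u ∈ Set.Icc δ (1 / 2)) :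
    ‖expSum K (u ^ d - t ^ d)‖ ^ 2 ≤ 2 * K ^ 2 / (1 + (2 * K * δ ^ (d - 1) * (u - t)) ^ 2) := by
  have ht0 : 0 ≤ t := hδ.trans ht.1
  have hu0 : 0 ≤ u := hδ.trans hu.1
  have htd : t ^ d ≤ 1 / 2 := (pow_le_of_le_one ht0 (by linarith [ht.2]) hd).trans ht.2
  have hud : u ^ d ≤ 1 / 2 := (pow_le_of_le_one hu0 (by linarith [hu.2]) hd).trans hu.2
  have hsmall : |u ^ d - t ^ d| ≤ 1 / 2 := by
    rw [abs_sub_le_iff]; constructor <;> linarith [pow_nonneg ht0 d, pow_nonneg hu0 d]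
  refine (sq_norm_expSum_le hsmall).trans (div_le_div_of_nonneg_left (by positivity)
    (by positivity) (add_le_add_right (sq_le_sq.mpr ?_) 1))
  simp only [abs_mul, abs_of_nonneg (by positivity : (0:ℝ) ≤ 2 * K), abs_pow, abs_of_nonneg hδ]
  rw [mul_assoc]
  gcongr
  exact pow_mul_abs_sub_le_abs_pow_sub_pow hd hδ ht.1 hu.1

lemma norm_integral_mul_sq_norm_expSum_pow_sub_pow_le {δ t : ℝ} (hδ : 0 < δ) (hδ2 : δ ≤ 1 / 2)
    (ht : t ∈ Set.Icc δ (1 / 2)) {d K : ℕ} (hd : d ≠ 0) (hK : K ≠ 0) {g : ℝ → ℂ}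
    (hg1 : ∀ t, ‖g t‖ ≤ 1) :
    ‖∫ u in δ..1 / 2, g t * conj (g u) * ((‖expSum K (u ^ d - t ^ d)‖ ^ 2 : ℝ) : ℂ)‖
      ≤ π * K / δ ^ (d - 1) := by
  set β : ℝ := 2 * K * δ ^ (d - 1) with hβ_def
  have hβ : 0 < β := by positivity
  have hpt : ∀ u ∈ Set.Icc δ (1 / 2),
      ‖g t * conj (g u) * ((‖expSum K (u ^ d - t ^ d)‖ ^ 2 : ℝ) : ℂ)‖
        ≤ 2 * K ^ 2 * (1 + (β * (u - t)) ^ 2)⁻¹ := by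
    intro u hu
    rw [norm_mul, norm_mul, RCLike.norm_conj, Complex.norm_of_nonneg (by positivity),
      ← div_eq_mul_inv]
    refine le_trans ?_ (sq_norm_expSum_pow_sub_pow_le K hd hδ.le ht hu)
    exact mul_le_of_le_one_left (by positivity) (mul_le_one₀ (hg1 t) (norm_nonneg _) (hg1 u))
  calc _ ≤ ∫ u in δ..1 / 2, 2 * (K : ℝ) ^ 2 * (1 + (β * (u - t)) ^ 2)⁻¹ :=
        intervalIntegral.norm_integral_le_of_norm_le hδ2
          (ae_of_all _ fun u hu => hpt u (Set.Ioc_subset_Icc_self hu))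
          ((continuous_const.mul ((by fun_prop : Continuous fun u => 1 + (β * (u - t)) ^ 2).inv₀
            fun u => by positivity)).intervalIntegrable _ _)
    _ ≤ 2 * (K : ℝ) ^ 2 * (π / β) := by
        rw [intervalIntegral.integral_const_mul]
        gcongr
        exact integral_inv_one_add_sq_mul_sub_le hβ _ _ t
    _ = π * K / δ ^ (d - 1) := by rw [hβ_def]; field_simp

lemma sum_sq_norm_integral_pow_le {δ : ℝ} (hδ : 0 < δ) (hδ2 : δ ≤ 1 / 2) {d K : ℕ} (hd : d ≠ 0)
    (hK : K ≠ 0) {g : ℝ → ℂ} (hg : Continuous g) (hg1 : ∀ t, ‖g t‖ ≤ 1) :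
    ∑ p ∈ range K ×ˢ range K, ‖∫ t in δ..1 / 2, g t * e (-(t ^ d * ((p.2 : ℤ) - p.1 : ℤ)))‖ ^ 2
      ≤ π * K / (2 * δ ^ (d - 1)) := by
  rw [← Complex.norm_of_nonneg (sum_nonneg fun _ _ => by positivity),
    sum_sq_norm_integral_eq hg (continuous_pow d)]
  calc _ ≤ π * K / δ ^ (d - 1) * |1 / 2 - δ| :=
        intervalIntegral.norm_integral_le_of_norm_le_const fun t ht =>
          norm_integral_mul_sq_norm_expSum_pow_sub_pow_le hδ hδ2
            (Set.Ioc_subset_Icc_self (by rwa [Set.uIoc_of_le hδ2] at ht)) hd hK hg1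
    _ ≤ π * K / δ ^ (d - 1) * (1 / 2) := by
        gcongr; rw [abs_of_nonneg (by linarith)]; linarith
    _ = π * K / (2 * δ ^ (d - 1)) := by ring

lemma mul_sum_Icc_le_sum_range_sub {f : ℤ → ℝ} (hf : ∀ m, 0 ≤ f m) (M : ℕ) :
    M * ∑ m ∈ Icc (-(M : ℤ)) M, f m
      ≤ ∑ p ∈ range (2 * M) ×ˢ range (2 * M), f ((p.2 : ℤ) - p.1) := by
  set ι : ℤ × ℕ → ℕ × ℕ := fun q => (q.2 + (-q.1).toNat, q.2 + q.1.toNat)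
  have hinj : Set.InjOn ι ((Icc (-(M : ℤ)) M ×ˢ range M : Finset _) : Set (ℤ × ℕ)) := by
    rintro ⟨m, r⟩ - ⟨m', r'⟩ - h
    simp only [ι, Prod.mk.injEq] at h
    ext <;> simp <;> omega
  have hmaps : (Icc (-(M : ℤ)) M ×ˢ range M).image ι ⊆ range (2 * M) ×ˢ range (2 * M) := by
    simp only [subset_iff, mem_image, mem_product, mem_Icc, mem_range]
    rintro _ ⟨⟨m, r⟩, ⟨⟨hm, hm'⟩, hr⟩, rfl⟩
    simp only [ι]; omega
  calc M * ∑ m ∈ Icc (-(M : ℤ)) M, f m = ∑ q ∈ Icc (-(M : ℤ)) M ×ˢ range M, f q.1 := by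
        rw [sum_product, mul_sum]; simp
    _ = ∑ q ∈ Icc (-(M : ℤ)) M ×ˢ range M, f (((ι q).2 : ℤ) - (ι q).1) :=
        sum_congr rfl fun q _ => by simp only [ι]; congr 1; push_cast; omega
    _ = ∑ p ∈ (Icc (-(M : ℤ)) M ×ˢ range M).image ι, f ((p.2 : ℤ) - p.1) := by
        rw [sum_image hinj]
    _ ≤ _ := sum_le_sum_of_subset_of_nonneg hmaps fun _ _ _ => hf _

lemma sum_piFinset_eq_sum_sum_snoc {n : ℕ} {α β : Type*} [AddCommMonoid β]
    (S : Fin (n + 1) → Finset α) (f : (Fin (n + 1) → α) → β) :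
    ∑ ξ ∈ Fintype.piFinset S, f ξ
      = ∑ ζ ∈ Fintype.piFinset (Fin.init S), ∑ m ∈ S (Fin.last n), f (Fin.snoc ζ m) := by
  have h := filter_piFinset_eq_map_snocEquiv S fun _ => True
  simp only [filter_true] at h
  rw [h, sum_map, sum_product_right]
  rfl

lemma card_piFinset_Icc_le {n s N : ℕ} (hs : 1 ≤ s) (hN : 1 ≤ N) :
    (#(Fintype.piFinset fun i : Fin n => Icc (-((s : ℤ) * N ^ (i.1 + 1))) (s * N ^ (i.1 + 1)))
      : ℝ) ≤ (3 * s) ^ n * N ^ (n * (n + 1) / 2) := by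
  have hcard : ∀ i : Fin n, #(Icc (-((s : ℤ) * N ^ (i.1 + 1))) (s * N ^ (i.1 + 1)))
      ≤ 3 * s * N ^ (i.1 + 1) := by
    intro i
    have h1 : (1 : ℤ) ≤ s * N ^ (i.1 + 1) := by
      exact_mod_cast Nat.one_le_iff_ne_zero.mpr (by positivity)
    zify
    rw [Int.card_Icc, Int.toNat_of_nonneg (by linarith)]
    linarith
  have hgauss : ∑ i : Fin n, (i.1 + 1) = n * (n + 1) / 2 := by
    have h := sum_range_succ' (fun i => i) n
    rw [add_zero] at h
    rw [Fin.sum_univ_eq_sum_range (fun i => i + 1), ← h, sum_range_id, Nat.add_sub_cancel,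
      mul_comm]
  rw [Fintype.card_piFinset]
  exact_mod_cast (prod_le_prod' fun i _ => hcard i).trans_eq (by
    rw [prod_mul_distrib, prod_const, card_univ, Fintype.card_fin, prod_pow_eq_pow_sum, hgauss])

/-- The paper's `μ̂_{[δ,1/2]}(ξ)`. -/
noncomputable def momentCurveFourier {d : ℕ} (δ : ℝ) (ξ : Fin d → ℤ) : ℂ :=
  ∫ t in δ..1 / 2, e (-(∑ i : Fin d, t ^ (i.1 + 1) * (ξ i : ℝ)))

lemma momentCurveFourier_snoc {n : ℕ} (δ : ℝ) (ζ : Fin n → ℤ) (m : ℤ) :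
    momentCurveFourier δ (Fin.snoc ζ m : Fin (n + 1) → ℤ) = ∫ t in δ..1 / 2,
      e (-(∑ i : Fin n, t ^ (i.1 + 1) * (ζ i : ℝ))) * e (-(t ^ (n + 1) * m)) := by
  simp only [momentCurveFourier, Fin.sum_univ_castSucc, Fin.snoc_castSucc, Fin.snoc_last,
    Fin.val_castSucc, Fin.val_last, neg_add, e_add]

lemma sum_sq_norm_momentCurveFourier_snoc_le {n M : ℕ} (hM : M ≠ 0) {δ : ℝ} (hδ : 0 < δ)
    (hδ2 : δ ≤ 1 / 2) (ζ : Fin n → ℤ) :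
    ∑ m ∈ Icc (-(M : ℤ)) M, ‖momentCurveFourier δ (Fin.snoc ζ m : Fin (n + 1) → ℤ)‖ ^ 2
      ≤ π / δ ^ n := by
  rw [← mul_le_mul_iff_of_pos_left (by positivity : (0 : ℝ) < M)]
  calc _ ≤ ∑ p ∈ range (2 * M) ×ˢ range (2 * M),
        ‖momentCurveFourier δ (Fin.snoc ζ ((p.2 : ℤ) - p.1) : Fin (n + 1) → ℤ)‖ ^ 2 :=
        mul_sum_Icc_le_sum_range_sub (fun _ => by positivity) M
    _ ≤ π * ↑(2 * M) / (2 * δ ^ (n + 1 - 1)) := by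
        simp only [momentCurveFourier_snoc]
        exact sum_sq_norm_integral_pow_le hδ hδ2 n.succ_ne_zero (by omega) (by fun_prop)
          fun t => (norm_e _).le
    _ = M * (π / δ ^ n) := by push_cast; field_simp

/-- L² estimate on the Fourier transform of the moment curve measure over [δ, 1/2]. -/
theorem stmt_10 (d : ℕ) (hd : 2 ≤ d) :
    ∃ C : ℝ, 0 < C ∧ ∀ (δ : ℝ) (N : ℕ), 0 < δ → δ < 1 / 2 → 1 < (N : ℝ) * δ →
      ∑ ξ ∈ Fintype.piFinset (fun i : Fin d =>
          Finset.Icc (-(((d * (d + 1) / 2 : ℕ) : ℤ) * (N : ℤ) ^ (i.1 + 1)))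
            (((d * (d + 1) / 2 : ℕ) : ℤ) * (N : ℤ) ^ (i.1 + 1))),
        ‖∫ t in δ..(1 / 2 : ℝ), e (-(∑ i : Fin d, t ^ (i.1 + 1) * (ξ i : ℝ)))‖ ^ 2
      ≤ C * δ ^ ((1 : ℝ) - d) * (N : ℝ) ^ (d * (d + 1) / 2 - d) := by
  obtain ⟨n, rfl⟩ : ∃ n, d = n + 1 := ⟨d - 1, by omega⟩
  set s := (n + 1) * (n + 1 + 1) / 2
  have hs : 1 ≤ s := Nat.le_div_iff_mul_le two_pos |>.mpr (by nlinarith)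
  have hexp : s - (n + 1) = n * (n + 1) / 2 := by
    have : (n + 1) * (n + 1 + 1) = n * (n + 1) + 2 * (n + 1) := by ring
    simp only [s, this, Nat.add_mul_div_left _ _ two_pos, Nat.add_sub_cancel]
  refine ⟨π * (3 * s) ^ n, by positivity, fun δ N hδ hδ2 hNδ => ?_⟩
  have hN : 1 ≤ N := Nat.one_le_iff_ne_zero.mpr (by rintro rfl; norm_num at hNδ)
  change ∑ ξ ∈ _, ‖momentCurveFourier δ ξ‖ ^ 2 ≤ _
  rw [sum_piFinset_eq_sum_sum_snoc]
  calc _ ≤ ∑ ζ ∈ Fintype.piFinset fun i : Fin n =>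
          Icc (-((s : ℤ) * N ^ (i.1 + 1))) (s * N ^ (i.1 + 1)), π / δ ^ n :=
        sum_le_sum fun ζ _ => by
          simpa using sum_sq_norm_momentCurveFourier_snoc_le (M := s * N ^ (n + 1))
            (by positivity) hδ hδ2.le ζ
    _ ≤ (3 * s) ^ n * N ^ (n * (n + 1) / 2) * (π / δ ^ n) := by
        rw [sum_const, nsmul_eq_mul]
        gcongr
        exact card_piFinset_Icc_le hs hN
    _ = _ := by
        rw [hexp, Nat.cast_add_one, show (1 : ℝ) - (n + 1) = -n by ring, Real.rpow_neg hδ.le,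
          Real.rpow_natCast]
        ring
end

section
/- Let d ≥ 2 and ω = (ω_1,…,ω_d) ∈ ℝ^d with ω_k ≠ 0 for some maximal index k. Then there exists C_ω > 0 such that for all integers n ≠ m with max(n,m) ≥ C_ω, |ω_1(n−m) + ω_2(n²−m²) + … + ω_d(n^d−m^d)| ≥ c_ω |n−m| for some constant c_ω > 0. -/
/-- The linear combination ω·ξ_{n,m} is dominated by its highest nonzero-coefficient
term: key estimate in the proof of the segment mean value theorem. -/
theorem stmt_15 (d : ℕ) (hd : 2 ≤ d) (ω : Fin d → ℝ) (k : Fin d)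
    (hk : ω k ≠ 0) (hmax : ∀ j : Fin d, k < j → ω j = 0) :
    ∃ Cω cω : ℝ, 0 < Cω ∧ 0 < cω ∧ ∀ n m : ℕ, 1 ≤ n → 1 ≤ m → n ≠ m →
      Cω ≤ (max n m : ℝ) →
      cω * |(n : ℝ) - (m : ℝ)| ≤
        |∑ i : Fin d, ω i * ((n : ℝ) ^ (i.1 + 1) - (m : ℝ) ^ (i.1 + 1))| := by
  classical
  set A : ℝ := d * ∑ i : Fin d, |ω i| with hA
  have hωk : 0 < |ω k| := abs_pos.mpr hk
  have hdpos : (0:ℝ) < d := by positivity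
  have hApos : 0 < A := by
    refine mul_pos hdpos ?_
    exact Finset.sum_pos' (fun i _ => abs_nonneg _) ⟨k, Finset.mem_univ k, hωk⟩
  refine ⟨max 1 (2 * A / |ω k|), |ω k| / 2,
    lt_of_lt_of_le one_pos (le_max_left _ _), by positivity, ?_⟩
  intro n m hn hm hnm hC
  set x := (n : ℝ) with hxdef
  set y := (m : ℝ) with hydef
  have hx : (1:ℝ) ≤ x := by rw [hxdef]; exact_mod_cast hn
  have hy : (1:ℝ) ≤ y := by rw [hydef]; exact_mod_cast hm
  have hx0 : (0:ℝ) ≤ x := le_trans zero_le_one hx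
  have hy0 : (0:ℝ) ≤ y := le_trans zero_le_one hy
  set M := max x y with hM
  have hM1 : (1:ℝ) ≤ M := le_trans hx (le_max_left _ _)
  have hM0 : (0:ℝ) < M := lt_of_lt_of_le one_pos hM1
  have hMC : 2 * A / |ω k| ≤ M := le_trans (le_max_right _ _) hC
  have h2A : 2 * A ≤ |ω k| * M := by
    rw [div_le_iff₀ hωk] at hMC
    linarith [hMC]
  -- geometric sums
  set G : Fin d → ℝ := fun i => ∑ j ∈ Finset.range (i.1 + 1), x ^ j * y ^ (i.1 - j)
    with hG
  have key : ∑ i : Fin d, ω i * (x ^ (i.1 + 1) - y ^ (i.1 + 1))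
      = (∑ i : Fin d, ω i * G i) * (x - y) := by
    rw [Finset.sum_mul]
    refine Finset.sum_congr rfl fun i _ => ?_
    rw [mul_assoc]
    congr 1
    rw [← geom_sum₂_mul x y (i.1 + 1)]
    congr 1
  have hGnonneg : ∀ i : Fin d, 0 ≤ G i := by
    intro i
    exact Finset.sum_nonneg fun j _ => mul_nonneg (pow_nonneg hx0 _) (pow_nonneg hy0 _)
  have hGk : M ^ k.1 ≤ G k := by
    rcases max_cases x y with ⟨hmx, hxy⟩ | ⟨hmx, hxy⟩
    · -- M = x
      have := Finset.single_le_sum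
        (f := fun j => x ^ j * y ^ (k.1 - j))
        (fun j _ => mul_nonneg (pow_nonneg hx0 _) (pow_nonneg hy0 _))
        (Finset.self_mem_range_succ k.1)
      simpa [hM, hmx] using this
    · -- M = y
      have := Finset.single_le_sum
        (f := fun j => x ^ j * y ^ (k.1 - j))
        (fun j _ => mul_nonneg (pow_nonneg hx0 _) (pow_nonneg hy0 _))
        (Finset.mem_range.mpr (Nat.succ_pos k.1))
      simpa [hM, hmx] using this
  have hxM : x ≤ M := le_max_left _ _
  have hyM : y ≤ M := le_max_right _ _
  have hGle : ∀ i : Fin d, i < k → G i * M ≤ d * M ^ k.1 := by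
    intro i hik
    have h1 : G i ≤ (i.1 + 1) * M ^ i.1 := by
      calc G i ≤ ∑ j ∈ Finset.range (i.1 + 1), M ^ i.1 := by
            refine Finset.sum_le_sum fun j hj => ?_
            have hj' : j ≤ i.1 := Nat.lt_succ_iff.mp (Finset.mem_range.mp hj)
            calc x ^ j * y ^ (i.1 - j) ≤ M ^ j * M ^ (i.1 - j) := by
                  exact mul_le_mul (pow_le_pow_left₀ hx0 hxM j)
                    (pow_le_pow_left₀ hy0 hyM _) (pow_nonneg hy0 _) (pow_nonneg (le_of_lt hM0) _)
              _ = M ^ i.1 := by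
                  rw [← pow_add]
                  congr 1
                  omega
        _ = (i.1 + 1) * M ^ i.1 := by
            rw [Finset.sum_const, Finset.card_range]
            push_cast
            ring
    have h2 : G i * M ≤ (i.1 + 1) * M ^ (i.1 + 1) := by
      calc G i * M ≤ ((i.1 + 1) * M ^ i.1) * M :=
            mul_le_mul_of_nonneg_right h1 (le_of_lt hM0)
        _ = (i.1 + 1) * M ^ (i.1 + 1) := by ring
    refine le_trans h2 ?_
    have hle1 : (i.1 + 1 : ℝ) ≤ d := by
      have : i.1 + 1 ≤ d := i.2
      exact_mod_cast this
    have hle2 : M ^ (i.1 + 1) ≤ M ^ k.1 := by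
      apply pow_le_pow_right₀ hM1
      exact hik
    exact mul_le_mul hle1 hle2 (pow_nonneg (le_of_lt hM0) _) (le_of_lt hdpos)
  -- bound the tail
  have hT : |∑ i ∈ Finset.univ.erase k, ω i * G i| * M ≤ A * M ^ k.1 := by
    have h1 : |∑ i ∈ Finset.univ.erase k, ω i * G i|
        ≤ ∑ i ∈ Finset.univ.erase k, |ω i| * G i := by
      refine le_trans (Finset.abs_sum_le_sum_abs _ _) ?_
      refine Finset.sum_le_sum fun i _ => ?_
      rw [abs_mul, abs_of_nonneg (hGnonneg i)]
    have h2 : (∑ i ∈ Finset.univ.erase k, |ω i| * G i) * M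
        ≤ ∑ i ∈ Finset.univ.erase k, |ω i| * (d * M ^ k.1) := by
      rw [Finset.sum_mul]
      refine Finset.sum_le_sum fun i hi => ?_
      have hik : i ≠ k := Finset.ne_of_mem_erase hi
      rcases lt_or_gt_of_ne hik with h | h
      · calc |ω i| * G i * M = |ω i| * (G i * M) := by ring
          _ ≤ |ω i| * (d * M ^ k.1) :=
            mul_le_mul_of_nonneg_left (hGle i h) (abs_nonneg _)
      · rw [hmax i h]
        simp [mul_nonneg, mul_nonneg (le_of_lt hdpos) (pow_nonneg (le_of_lt hM0) _),
          abs_nonneg]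
    have h3 : ∑ i ∈ Finset.univ.erase k, |ω i| * (d * M ^ k.1) ≤ A * M ^ k.1 := by
      rw [hA]
      have : ∑ i ∈ Finset.univ.erase k, |ω i| * (d * M ^ k.1)
          = (∑ i ∈ Finset.univ.erase k, |ω i|) * (d * M ^ k.1) := by
        rw [Finset.sum_mul]
      rw [this]
      have h4 : (∑ i ∈ Finset.univ.erase k, |ω i|) ≤ ∑ i : Fin d, |ω i| :=
        Finset.sum_le_sum_of_subset_of_nonneg (Finset.erase_subset _ _)
          (fun i _ _ => abs_nonneg _)
      calc (∑ i ∈ Finset.univ.erase k, |ω i|) * (d * M ^ k.1)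
          ≤ (∑ i : Fin d, |ω i|) * (d * M ^ k.1) :=
            mul_le_mul_of_nonneg_right h4
              (mul_nonneg (le_of_lt hdpos) (pow_nonneg (le_of_lt hM0) _))
        _ = (d * ∑ i : Fin d, |ω i|) * M ^ k.1 := by ring
    calc |∑ i ∈ Finset.univ.erase k, ω i * G i| * M
        ≤ (∑ i ∈ Finset.univ.erase k, |ω i| * G i) * M :=
          mul_le_mul_of_nonneg_right h1 (le_of_lt hM0)
      _ ≤ ∑ i ∈ Finset.univ.erase k, |ω i| * (d * M ^ k.1) := h2
      _ ≤ A * M ^ k.1 := h3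
  have hTbound : |∑ i ∈ Finset.univ.erase k, ω i * G i| ≤ |ω k| / 2 * M ^ k.1 := by
    have h5 : A * M ^ k.1 ≤ (|ω k| / 2 * M ^ k.1) * M := by
      have : A ≤ |ω k| * M / 2 := by linarith
      calc A * M ^ k.1 ≤ (|ω k| * M / 2) * M ^ k.1 :=
            mul_le_mul_of_nonneg_right this (pow_nonneg (le_of_lt hM0) _)
        _ = (|ω k| / 2 * M ^ k.1) * M := by ring
    have := le_trans hT h5
    exact le_of_mul_le_mul_right this hM0
  -- main core inequality
  have hcore : |ω k| / 2 ≤ |∑ i : Fin d, ω i * G i| := by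
    have hsplit : ∑ i : Fin d, ω i * G i
        = ω k * G k + ∑ i ∈ Finset.univ.erase k, ω i * G i :=
      (Finset.add_sum_erase _ _ (Finset.mem_univ k)).symm
    have habs : |ω k * G k| - |∑ i ∈ Finset.univ.erase k, ω i * G i|
        ≤ |∑ i : Fin d, ω i * G i| := by
      rw [hsplit]
      have := abs_add_le (ω k * G k + ∑ i ∈ Finset.univ.erase k, ω i * G i)
        (-(∑ i ∈ Finset.univ.erase k, ω i * G i))
      simp only [add_neg_cancel_right, abs_neg] at this
      linarith
    have hkG : |ω k| * M ^ k.1 ≤ |ω k * G k| := by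
      rw [abs_mul, abs_of_nonneg (hGnonneg k)]
      exact mul_le_mul_of_nonneg_left hGk (abs_nonneg _)
    have hMk1 : (1:ℝ) ≤ M ^ k.1 := one_le_pow₀ hM1
    nlinarith [habs, hkG, hTbound, hMk1, hωk]
  -- conclude
  rw [key, abs_mul]
  exact mul_le_mul_of_nonneg_right hcore (abs_nonneg _)
end
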